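/- Let h ∈ ℂ[z₁,…,zₙ] be a stable polynomial and write h = g + i·f where f, g ∈ ℝ[z₁,…,zₙ] (so f and g are the polynomials formed from the imaginary and real parts of the coefficients of h). Then each of f and g is either real stable or identically zero. Consequently, the set of stable polynomials in n variables equals {g + i·f : f, g ∈ H_n(ℝ) ∪ {0}, f ≪ g}. -/

import Mathlib

/-!
Let `h̄` be `h` with conjugated coefficients, so that `g = (h + h̄) / 2` and `f = (h - h̄) / (2i)`.
Restricted to a real line through a point of the upper half-space, `h` is a univariate polynomial
with all roots in the closed lower half-plane; factoring it into linear terms gives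
`|h̄(z)| = |h(conj z)| ≤ |h(z)|` on the upper half-space. Hence `h̄ / h` is holomorphic there with
modulus at most `1`. If `f` (resp. `g`) vanished at a point of the upper half-space, `h̄ / h` would
take the value `1` (resp. `-1`) there, and the maximum modulus principle forces `h̄ = h`
(resp. `h̄ = -h`), i.e. `f = 0` (resp. `g = 0`). The description of all stable polynomials then
only needs that every complex polynomial is `g + i f` with `f`, `g` real.
-/

open MvPolynomial

def IsStable {σ : Type*} (f : MvPolynomial σ ℂ) : Prop :=
  ∀ z : σ → ℂ, (∀ i, 0 < (z i).im) → eval z f ≠ 0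

def IsRealStable {σ : Type*} (f : MvPolynomial σ ℝ) : Prop :=
  IsStable (f.map (algebraMap ℝ ℂ))

def ProperPosition {σ : Type*} (f g : MvPolynomial σ ℝ) : Prop :=
  IsStable (g.map (algebraMap ℝ ℂ) + C Complex.I * f.map (algebraMap ℝ ℂ))

open ComplexConjugate

lemma Complex.norm_conj_sub_le_norm_sub {z r : ℂ} (hz : 0 < z.im) (hr : r.im ≤ 0) :
    ‖conj z - r‖ ≤ ‖z - r‖ := by
  rw [Complex.norm_def, Complex.norm_def]
  apply Real.sqrt_le_sqrt
  simp only [Complex.normSq_apply, Complex.sub_re, Complex.sub_im, Complex.conj_re,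
    Complex.conj_im]
  nlinarith

lemma Polynomial.norm_eval_conj_le {p : Polynomial ℂ} (hp : ∀ s : ℂ, 0 < s.im → p.eval s ≠ 0)
    {z : ℂ} (hz : 0 < z.im) : ‖p.eval (conj z)‖ ≤ ‖p.eval z‖ := by
  have hroots : ∀ r ∈ p.roots, r.im ≤ 0 := fun r hr =>
    not_lt.1 fun h => hp r h (isRoot_of_mem_roots hr)
  have heval (w : ℂ) : p.eval w = p.leadingCoeff * (p.roots.map (w - ·)).prod := by
    conv_lhs => rw [(IsAlgClosed.splits p).eq_prod_roots]
    simp [eval_multiset_prod, Multiset.map_map]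
  rw [heval, heval, norm_mul, norm_mul]
  gcongr
  revert hroots
  induction p.roots using Multiset.induction_on with
  | empty => simp
  | cons a s ih =>
    intro hroots
    simp only [Multiset.mem_cons, forall_eq_or_imp] at hroots
    simp only [Multiset.map_cons, Multiset.prod_cons, norm_mul]
    exact mul_le_mul (Complex.norm_conj_sub_le_norm_sub hz hroots.1) (ih hroots.2)
      (norm_nonneg _) (norm_nonneg _)

section

variable {σ : Type*}

namespace MvPolynomial

lemma eval_aeval_C_add_C_mul_X (x v : σ → ℂ) (h : MvPolynomial σ ℂ) (s : ℂ) :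
    (aeval (fun j => Polynomial.C (x j) + Polynomial.C (v j) * Polynomial.X) h).eval s
      = eval (fun j => x j + v j * s) h := by
  induction h using MvPolynomial.induction_on with
  | C a => simp
  | add p q hp hq => simp [hp, hq]
  | mul_X p j hp => simp [hp]

lemma eval_map_conj (z : σ → ℂ) (h : MvPolynomial σ ℂ) :
    eval z (h.map (starRingEnd ℂ)) = conj (eval (conj z) h) := by
  induction h using MvPolynomial.induction_on with
  | C a => simp
  | add p q hp hq => simp [hp, hq]
  | mul_X p j hp => simp [hp]

lemma map_conj_map_ofReal (p : MvPolynomial σ ℝ) :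
    (p.map (algebraMap ℝ ℂ)).map (starRingEnd ℂ) = p.map (algebraMap ℝ ℂ) := by
  rw [map_map, show (starRingEnd ℂ).comp (algebraMap ℝ ℂ) = algebraMap ℝ ℂ from
    RingHom.ext Complex.conj_ofReal]

end MvPolynomial

lemma IsStable.norm_eval_conj_le {h : MvPolynomial σ ℂ} (hh : IsStable h) {z : σ → ℂ}
    (hz : ∀ i, 0 < (z i).im) : ‖eval (conj z) h‖ ≤ ‖eval z h‖ := by
  set x : σ → ℂ := fun j => ((z j).re : ℂ)
  set v : σ → ℂ := fun j => ((z j).im : ℂ)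
  -- On the line `s ↦ Re z + s Im z`, which maps the upper half-plane into the upper
  -- half-space, `s = i` gives `z` and `s = -i` gives `conj z`.
  have hline := Polynomial.norm_eval_conj_le
    (p := aeval (fun j => Polynomial.C (x j) + Polynomial.C (v j) * Polynomial.X) h)
    (fun s hs => by
      rw [eval_aeval_C_add_C_mul_X]
      refine hh _ fun j => ?_
      simpa [x, v] using mul_pos (hz j) hs)
    (z := Complex.I) (by simp)
  simp only [eval_aeval_C_add_C_mul_X, Complex.conj_I] at hline
  convert hline using 4 <;> funext j <;> apply Complex.ext <;> simp [x, v]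

lemma IsStable.map_conj_eq_C_mul [Fintype σ] {h : MvPolynomial σ ℂ} (hh : IsStable h)
    {z₀ : σ → ℂ} (hz₀ : ∀ i, 0 < (z₀ i).im) {c : ℂ} (hc : ‖c‖ = 1)
    (hc₀ : eval z₀ (h.map (starRingEnd ℂ)) = c * eval z₀ h) :
    h.map (starRingEnd ℂ) = C c * h := by
  set H : Set ℂ := {w : ℂ | 0 < w.im}
  set U : Set (σ → ℂ) := Set.univ.pi fun _ => H
  have hU (z : σ → ℂ) : z ∈ U ↔ ∀ i, 0 < (z i).im := by simp [U, H]
  set φ : (σ → ℂ) → ℂ := fun z => eval z (h.map (starRingEnd ℂ)) / eval z h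
  have hφ₀ : φ z₀ = c := by
    simp only [φ]
    rw [hc₀, mul_div_cancel_right₀ _ (hh z₀ hz₀)]
  have hmax : IsMaxOn (norm ∘ φ) U z₀ := fun z hz => by
    change ‖φ z‖ ≤ ‖φ z₀‖
    rw [hφ₀, hc, norm_div, eval_map_conj, Complex.norm_conj]
    exact div_le_one_of_le₀ (hh.norm_eval_conj_le ((hU z).1 hz)) (norm_nonneg _)
  have hdiff : DifferentiableOn ℂ φ U := by
    have heval (p : MvPolynomial σ ℂ) : DifferentiableOn ℂ (eval · p) U :=
      (AnalyticOnNhd.eval_mvPolynomial p).differentiableOn.mono (Set.subset_univ _)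
    simp only [φ, div_eq_mul_inv]
    exact (heval _).mul ((heval h).inv fun z hz => hh z ((hU z).1 hz))
  have hφ_const := Complex.eqOn_of_isPreconnected_of_isMaxOn_norm
    (convex_pi fun _ _ => convex_halfSpace_im_gt 0).isPreconnected
    (isOpen_set_pi Set.finite_univ fun _ _ => Complex.isOpen_im_gt 0) hdiff ((hU z₀).2 hz₀) hmax
  have hH : H.Infinite :=
    infinite_of_mem_nhds Complex.I ((Complex.isOpen_im_gt 0).mem_nhds (by simp))
  refine funext_set (fun _ => H) (fun _ => hH) fun z hz => ?_
  have hφz := hφ_const hz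
  simp only [Function.const_apply, hφ₀, φ] at hφz
  rw [div_eq_iff (hh z ((hU z).1 hz))] at hφz
  simp [hφz]

lemma isRealStable_or_eq_zero_of_isStable [Fintype σ] {f g : MvPolynomial σ ℝ}
    (hst : IsStable (g.map (algebraMap ℝ ℂ) + C Complex.I * f.map (algebraMap ℝ ℂ))) :
    (IsRealStable f ∨ f = 0) ∧ (IsRealStable g ∨ g = 0) := by
  have hconj : (g.map (algebraMap ℝ ℂ) + C Complex.I * f.map (algebraMap ℝ ℂ)).map
      (starRingEnd ℂ) = g.map (algebraMap ℝ ℂ) - C Complex.I * f.map (algebraMap ℝ ℂ) := by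
    simp [map_conj_map_ofReal, sub_eq_add_neg]
  have hinj := map_injective (σ := σ) _ (algebraMap ℝ ℂ).injective
  constructor
  · refine or_iff_not_imp_right.2 fun hf z hz hfz => hf (hinj ?_)
    have hfix := hst.map_conj_eq_C_mul hz (c := 1) (by simp) (by simp [hconj, hfz])
    rw [hconj, C_1, one_mul] at hfix
    have : 2 * (C Complex.I * f.map (algebraMap ℝ ℂ)) = 0 := by linear_combination -hfix
    simpa [Complex.I_ne_zero] using this
  · refine or_iff_not_imp_right.2 fun hg z hz hgz => hg (hinj ?_)
    have hanti := hst.map_conj_eq_C_mul hz (c := -1) (by simp) (by simp [hconj, hgz])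
    rw [hconj, C_neg, C_1, neg_one_mul] at hanti
    have : 2 * g.map (algebraMap ℝ ℂ) = 0 := by linear_combination hanti
    simpa using this

end

lemma exists_eq_map_add_I_mul_map (h : MvPolynomial σ ℂ) :
    ∃ f g : MvPolynomial σ ℝ,
      h = g.map (algebraMap ℝ ℂ) + C Complex.I * f.map (algebraMap ℝ ℂ) := by
  induction h using MvPolynomial.induction_on with
  | C a =>
    refine ⟨C a.im, C a.re, ?_⟩
    rw [map_C, map_C, ← C_mul, ← C_add, Complex.coe_algebraMap,
      mul_comm, Complex.re_add_im]
  | add p q hp hq =>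
    obtain ⟨f, g, rfl⟩ := hp
    obtain ⟨f', g', rfl⟩ := hq
    exact ⟨f + f', g + g', by simp only [map_add]; ring⟩
  | mul_X p j hp =>
    obtain ⟨f, g, rfl⟩ := hp
    exact ⟨f * X j, g * X j, by simp only [map_mul, map_X]; ring⟩

theorem stmt1 {n : ℕ} :
    (∀ f g : MvPolynomial (Fin n) ℝ,
      IsStable (g.map (algebraMap ℝ ℂ) + C Complex.I * f.map (algebraMap ℝ ℂ)) →
      (IsRealStable f ∨ f = 0) ∧ (IsRealStable g ∨ g = 0)) ∧
    {h : MvPolynomial (Fin n) ℂ | IsStable h} =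
      {h : MvPolynomial (Fin n) ℂ | ∃ f g : MvPolynomial (Fin n) ℝ,
        (IsRealStable f ∨ f = 0) ∧ (IsRealStable g ∨ g = 0) ∧ ProperPosition f g ∧
        h = g.map (algebraMap ℝ ℂ) + C Complex.I * f.map (algebraMap ℝ ℂ)} := by
  refine ⟨fun f g => isRealStable_or_eq_zero_of_isStable, Set.ext fun h => ⟨fun hh => ?_, ?_⟩⟩
  · obtain ⟨f, g, rfl⟩ := exists_eq_map_add_I_mul_map h
    have hfg := isRealStable_or_eq_zero_of_isStable hh
    exact ⟨f, g, hfg.1, hfg.2, hh, rfl⟩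
  · rintro ⟨f, g, -, -, hfg, rfl⟩
    exact hfg
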